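/- arXiv:1701.01396 — 2 statements merged into one kernel-verified Lean document; each statement's English description precedes it below -/
import Mathlib

section
/- Suppose Q and Q′ are linearly independent quadratic forms in R₂ such that every nonzero element of kQ + kQ′ has rank at most two, and suppose Q = ab where a, b ∈ R₁ are linearly independent. Then Q′ ∈ R₁a, or Q′ ∈ R₁b, or Q′ = αa² + βab + γb² for some α, γ ∈ k^× and β ∈ k. ([SV], Lemma 2.3, second assertion.) -/
noncomputable section

open MvPolynomial

/-- The quadratic form `xᵀNx` associated to a 4×4 matrix `N`. -/
def quadOfMat (k : Type*) [Field k] (N : Matrix (Fin 4) (Fin 4) k) :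
    MvPolynomial (Fin 4) k :=
  ∑ i, ∑ j, N i j • (X i * X j)

/-- `q` has rank at most `r`: the (unique, as char k ≠ 2) symmetric matrix `N`
with `q = xᵀNx` has rank at most `r`. -/
def HasRankLE (k : Type*) [Field k] (q : MvPolynomial (Fin 4) k) (r : ℕ) : Prop :=
  ∃ N : Matrix (Fin 4) (Fin 4) k, N.IsSymm ∧ q = quadOfMat k N ∧ N.rank ≤ r

/-! Choose coordinates `y₀ = a, y₁ = b, y₂, y₃` and write `Q' = ∑ mᵢⱼ yᵢ yⱼ` with `m` symmetric.
Since `Q = y₀y₁`, every matrix `m + tE`, where `E = hyperbolicMatrix k` is the matrix of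
`2y₀y₁`, has rank at most two. For `i, j ≥ 2` the minor of `m + tE` on rows `{0, 1, i}` and
columns `{0, 1, j}` is a quadratic polynomial in `t`, and the vanishing of its coefficients
gives `mᵢⱼ = 0`, `m₀ᵢm₁ⱼ + m₀ⱼm₁ᵢ = 0` and `m₁₁m₀ᵢm₀ⱼ + m₀₀m₁ᵢm₁ⱼ = 0`. The middle relation
forces one of the vectors `(m₀ᵢ)ᵢ₌₂,₃` and `(m₁ᵢ)ᵢ₌₂,₃` to vanish, the last one then kills
`m₁₁` or `m₀₀` unless both vectors vanish, and the shape of `m` that remains is one of the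
three alternatives. -/

open Matrix

section LinearAlgebra

variable {k : Type*} [Field k]

theorem Matrix.IsSymm.eq_zero_of_forall_dotProduct_mulVec_self {n : Type*} [Fintype n]
    [DecidableEq n] (h2 : (2 : k) ≠ 0) {N : Matrix n n k} (hN : N.IsSymm)
    (h : ∀ x, x ⬝ᵥ N *ᵥ x = 0) : N = 0 := by
  have hpolar : ∀ x y, 2 * (x ⬝ᵥ N *ᵥ y) = 0 := fun x y => by
    have hswap : y ⬝ᵥ N *ᵥ x = x ⬝ᵥ N *ᵥ y := by
      rw [dotProduct_mulVec, dotProduct_comm, ← mulVec_transpose, hN.eq]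
    have := h (x + y)
    simp only [mulVec_add, add_dotProduct, dotProduct_add, h x, h y, hswap] at this
    linear_combination this
  ext i j
  simpa [h2] using hpolar (Pi.single i 1) (Pi.single j 1)

theorem Matrix.IsSymm.transpose_mul_mul {n : Type*} [Fintype n] {N : Matrix n n k}
    (hN : N.IsSymm) (S : Matrix n n k) : (Sᵀ * N * S).IsSymm := by
  rw [IsSymm, transpose_mul, transpose_mul, transpose_transpose, hN.eq, Matrix.mul_assoc]

theorem Matrix.IsSymm.exists_isSymm_transpose_mul_mul_eq {n : Type*} [Fintype n]
    [DecidableEq n] {N : Matrix n n k} (hN : N.IsSymm) {S : Matrix n n k} (hS : IsUnit S) :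
    ∃ m : Matrix n n k, m.IsSymm ∧ Sᵀ * m * S = N := by
  have hSS : S⁻¹ * S = 1 := nonsing_inv_mul S ((isUnit_iff_isUnit_det S).mp hS)
  refine ⟨S⁻¹ᵀ * N * S⁻¹, hN.transpose_mul_mul _, ?_⟩
  calc Sᵀ * (S⁻¹ᵀ * N * S⁻¹) * S = (S⁻¹ * S)ᵀ * N * (S⁻¹ * S) := by
        simp only [transpose_mul, Matrix.mul_assoc]
    _ = N := by rw [hSS, transpose_one, Matrix.one_mul, Matrix.mul_one]

theorem Matrix.det_submatrix_eq_zero_of_rank_lt {m n : Type*} [Fintype n] {p : ℕ}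
    (A : Matrix m n k) (r : Fin p → m) (c : Fin p → n) (h : A.rank < p) :
    (A.submatrix r c).det = 0 := by
  by_contra hne
  have hfull := (A.submatrix r c).rank_of_isUnit ((isUnit_iff_isUnit_det _).mpr (Ne.isUnit hne))
  have hle := A.rank_submatrix_le r c
  rw [hfull, Fintype.card_fin] at hle
  omega

theorem exists_isUnit_matrix_castLE_row_eq {m n : ℕ} (hmn : m ≤ n) (f : Fin m → Fin n → k)
    (hf : LinearIndependent k f) :
    ∃ S : Matrix (Fin n) (Fin n) k, IsUnit S ∧ ∀ i, S (Fin.castLE hmn i) = f i := by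
  suffices ∀ l (hml : m ≤ l), l ≤ n →
      ∃ g : Fin l → Fin n → k, LinearIndependent k g ∧ ∀ i, g (Fin.castLE hml i) = f i by
    obtain ⟨g, hg, hgf⟩ := this n hmn le_rfl
    exact ⟨Matrix.of g, linearIndependent_rows_iff_isUnit.mp hg, hgf⟩
  intro l hml
  induction l, hml using Nat.le_induction with
  | base => exact fun _ => ⟨f, hf, fun i => rfl⟩
  | succ l hml ih =>
    intro hln
    obtain ⟨g, hg, hgf⟩ := ih (by omega)
    obtain ⟨x, hx⟩ := exists_linearIndependent_snoc_of_lt_finrank hg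
      (by rw [Module.finrank_fin_fun]; omega)
    refine ⟨Fin.snoc g x, hx, fun i => ?_⟩
    rw [← hgf i, ← Fin.snoc_castSucc (α := fun _ => Fin n → k) x g]
    rfl

theorem eq_zero_of_forall_quadratic_eq_zero (h2 : (2 : k) ≠ 0) {a b c : k}
    (h : ∀ t, a * t ^ 2 + b * t + c = 0) : a = 0 ∧ b = 0 ∧ c = 0 := by
  have h0 := h 0
  have h1 := h 1
  have hm1 := h (-1)
  have ha : a = 0 := (mul_eq_zero.mp (by linear_combination h1 + hm1 - 2 * h0)).resolve_left h2
  have hb : b = 0 := (mul_eq_zero.mp (by linear_combination h1 - hm1)).resolve_left h2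
  exact ⟨ha, hb, by linear_combination h0⟩

theorem eq_zero_or_eq_zero_of_mul_add_mul_eq_zero (h2 : (2 : k) ≠ 0) {ι : Type*} {s : Set ι}
    {u v : ι → k} (h : ∀ i ∈ s, ∀ j ∈ s, u i * v j + u j * v i = 0) :
    (∀ i ∈ s, u i = 0) ∨ (∀ i ∈ s, v i = 0) := by
  by_contra! ⟨⟨i, hi, hui⟩, ⟨j, hj, hvj⟩⟩
  have hvi : v i = 0 := by
    have hii : 2 * (u i * v i) = 0 := by linear_combination h i hi i hi
    exact (mul_eq_zero.mp ((mul_eq_zero.mp hii).resolve_left h2)).resolve_left hui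
  have hij := h i hi j hj
  rw [hvi, mul_zero, add_zero] at hij
  exact hvj ((mul_eq_zero.mp hij).resolve_left hui)

end LinearAlgebra

def quadOfMatIn {ι R A : Type*} [Fintype ι] [CommSemiring R] [Semiring A] [Algebra R A]
    (N : Matrix ι ι R) (L : ι → A) : A :=
  ∑ i, ∑ j, N i j • (L i * L j)

section QuadOfMatIn

variable {ι R A : Type*} [Fintype ι] [CommRing R] [CommRing A] [Algebra R A]

theorem quadOfMatIn_add (N N' : Matrix ι ι R) (L : ι → A) :
    quadOfMatIn (N + N') L = quadOfMatIn N L + quadOfMatIn N' L := by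
  simp only [quadOfMatIn, Matrix.add_apply, add_smul, Finset.sum_add_distrib]

theorem quadOfMatIn_smul (c : R) (N : Matrix ι ι R) (L : ι → A) :
    quadOfMatIn (c • N) L = c • quadOfMatIn N L := by
  simp only [quadOfMatIn, Matrix.smul_apply, smul_eq_mul, mul_smul, Finset.smul_sum]

theorem quadOfMatIn_eq_dotProduct_mulVec (N : Matrix ι ι R) (L : ι → A) :
    quadOfMatIn N L = L ⬝ᵥ N.map (algebraMap R A) *ᵥ L := by
  simp only [quadOfMatIn, dotProduct, mulVec, Finset.mul_sum, map_apply, Algebra.smul_def]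
  exact Finset.sum_congr rfl fun i _ => Finset.sum_congr rfl fun j _ => by ring

theorem quadOfMatIn_transpose_mul_mul (S N : Matrix ι ι R) (L : ι → A) :
    quadOfMatIn (Sᵀ * N * S) L = quadOfMatIn N fun i => ∑ j, S i j • L j := by
  have hS : (fun i => ∑ j, S i j • L j) = S.map (algebraMap R A) *ᵥ L := by
    ext i
    simp [mulVec, dotProduct, Algebra.smul_def]
  rw [hS, quadOfMatIn_eq_dotProduct_mulVec, quadOfMatIn_eq_dotProduct_mulVec, Matrix.map_mul,
    Matrix.map_mul, transpose_map, ← mulVec_mulVec, ← mulVec_mulVec, dotProduct_mulVec,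
    vecMul_transpose]

theorem quadOfMatIn_eq_mul_of_forall_ne [DecidableEq ι] {N : Matrix ι ι R} (hN : N.IsSymm)
    (L : ι → A) {p : ι} (h : ∀ i j, i ≠ p → j ≠ p → N i j = 0) :
    quadOfMatIn N L = (2 * ∑ j, N p j • L j - N p p • L p) * L p := by
  have hrow : ∀ i ≠ p, ∑ j, N i j • (L i * L j) = (N p i • L i) * L p := fun i hi => by
    rw [Finset.sum_eq_single p (fun j _ hj => by rw [h i j hi hj, zero_smul]) (by simp),
      hN.apply, smul_mul_assoc]
  have hrest : ∑ i ∈ Finset.univ.erase p, N p i • L i = ∑ j, N p j • L j - N p p • L p :=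
    Finset.sum_erase_eq_sub (Finset.mem_univ p)
  have hfirst : ∑ j, N p j • (L p * L j) = L p * ∑ j, N p j • L j := by
    rw [Finset.mul_sum]
    exact Finset.sum_congr rfl fun j _ => (mul_smul_comm _ _ _).symm
  rw [quadOfMatIn, ← Finset.add_sum_erase _ _ (Finset.mem_univ p),
    Finset.sum_congr rfl fun i hi => hrow i (Finset.ne_of_mem_erase hi), ← Finset.sum_mul,
    hrest, hfirst]
  ring

theorem exists_mem_span_quadOfMatIn_eq_mul_of_forall_ne [DecidableEq ι] {N : Matrix ι ι R}
    (hN : N.IsSymm) (L : ι → A) {p : ι} (h : ∀ i j, i ≠ p → j ≠ p → N i j = 0) :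
    ∃ ℓ ∈ Submodule.span R (Set.range L), quadOfMatIn N L = ℓ * L p := by
  refine ⟨_, ?_, quadOfMatIn_eq_mul_of_forall_ne hN L h⟩
  have hsum : ∑ j, N p j • L j ∈ Submodule.span R (Set.range L) :=
    Submodule.sum_mem _ fun j _ => Submodule.smul_mem _ _ (Submodule.subset_span ⟨j, rfl⟩)
  rw [two_mul]
  exact Submodule.sub_mem _ (Submodule.add_mem _ hsum hsum)
    (Submodule.smul_mem _ _ (Submodule.subset_span ⟨p, rfl⟩))

theorem quadOfMatIn_eq_of_forall_two_le {N : Matrix (Fin 4) (Fin 4) R} (hN : N.IsSymm)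
    (L : Fin 4 → A) (h : ∀ i j, 2 ≤ j → N i j = 0) :
    quadOfMatIn N L = N 0 0 • L 0 ^ 2 + (2 * N 0 1) • (L 0 * L 1) + N 1 1 • L 1 ^ 2 := by
  have hcol : ∀ i, N i 2 = 0 ∧ N i 3 = 0 := fun i => ⟨h i 2 (by decide), h i 3 (by decide)⟩
  have hrow : ∀ j, N 2 j = 0 ∧ N 3 j = 0 := fun j => by simpa only [hN.apply] using hcol j
  simp only [quadOfMatIn, Fin.sum_univ_four, hcol, hrow, hN.apply 1 0, zero_smul, add_zero]
  simp only [Algebra.smul_def, map_mul, map_ofNat]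
  ring

end QuadOfMatIn

section Pencil

variable {k : Type*} [Field k]

def hyperbolicMatrix (k : Type*) [Field k] : Matrix (Fin 4) (Fin 4) k :=
  single 0 1 1 + single 1 0 1

theorem hyperbolicMatrix_isSymm : (hyperbolicMatrix k).IsSymm := by
  simp [hyperbolicMatrix, IsSymm, transpose_add, add_comm]

theorem quadOfMatIn_hyperbolicMatrix {A : Type*} [CommRing A] [Algebra k A] (L : Fin 4 → A) :
    quadOfMatIn (hyperbolicMatrix k) L = 2 * (L 0 * L 1) := by
  simp [quadOfMatIn, hyperbolicMatrix, Fin.sum_univ_four, single_apply]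
  ring

theorem det_submatrix_add_smul_hyperbolicMatrix {m : Matrix (Fin 4) (Fin 4) k} (hm : m.IsSymm)
    (t : k) {i j : Fin 4} (hi : 2 ≤ i) (hj : 2 ≤ j) :
    ((m + t • hyperbolicMatrix k).submatrix ![0, 1, i] ![0, 1, j]).det =
      -m i j * t ^ 2 + (m 0 i * m 1 j + m 0 j * m 1 i - 2 * m 0 1 * m i j) * t +
      (m i j * (m 0 0 * m 1 1 - m 0 1 ^ 2) + m 0 1 * (m 0 i * m 1 j + m 0 j * m 1 i)
        - m 1 1 * m 0 i * m 0 j - m 0 0 * m 1 i * m 1 j) := by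
  have hne : ∀ l : Fin 4, 2 ≤ l → 0 ≠ l ∧ 1 ≠ l := by decide
  obtain ⟨hi0, hi1⟩ := hne i hi
  obtain ⟨hj0, hj1⟩ := hne j hj
  rw [det_fin_three]
  simp [hyperbolicMatrix, hi0, hi1, hj0, hj1, hm.apply i 0, hm.apply i 1, hm.apply 1 0]
  ring

theorem entries_of_rank_pencil_le_two (h2 : (2 : k) ≠ 0) {m : Matrix (Fin 4) (Fin 4) k}
    (hm : m.IsSymm) (hrank : ∀ t : k, (m + t • hyperbolicMatrix k).rank ≤ 2) {i j : Fin 4}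
    (hi : 2 ≤ i) (hj : 2 ≤ j) :
    m i j = 0 ∧ m 0 i * m 1 j + m 0 j * m 1 i = 0 ∧
      m 1 1 * m 0 i * m 0 j + m 0 0 * m 1 i * m 1 j = 0 := by
  obtain ⟨hij, hcross, hconst⟩ := eq_zero_of_forall_quadratic_eq_zero h2 fun t => by
    rw [← det_submatrix_add_smul_hyperbolicMatrix hm t hi hj]
    exact det_submatrix_eq_zero_of_rank_lt _ _ _ (by have := hrank t; omega)
  rw [neg_eq_zero] at hij
  refine ⟨hij, by linear_combination hcross + 2 * m 0 1 * hij, ?_⟩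
  linear_combination -hconst + m 0 1 * hcross + (m 0 0 * m 1 1 + m 0 1 ^ 2) * hij

theorem trichotomy_of_rank_pencil_le_two (h2 : (2 : k) ≠ 0) {m : Matrix (Fin 4) (Fin 4) k}
    (hm : m.IsSymm)
    (hrank : ∀ t : k, (m + t • hyperbolicMatrix k).rank ≤ 2) :
    (∀ i j, i ≠ 0 → j ≠ 0 → m i j = 0) ∨ (∀ i j, i ≠ 1 → j ≠ 1 → m i j = 0) ∨
      (m 0 0 ≠ 0 ∧ m 1 1 ≠ 0 ∧ ∀ i j, 2 ≤ j → m i j = 0) := by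
  have hrel := fun {i j} => entries_of_rank_pencil_le_two h2 hm hrank (i := i) (j := j)
  have hsq : ∀ i, 2 ≤ i → m 1 1 * m 0 i ^ 2 + m 0 0 * m 1 i ^ 2 = 0 := fun i hi => by
    linear_combination (hrel hi hi).2.2
  have hcorner : ∀ p q : Fin 4, (∀ i, i ≠ p → i = q ∨ 2 ≤ i) → m q q = 0 →
      (∀ i, 2 ≤ i → m q i = 0) → ∀ i j, i ≠ p → j ≠ p → m i j = 0 := by
    intro p q hpq hqq hq i j hi hj
    rcases hpq i hi with rfl | hi <;> rcases hpq j hj with rfl | hj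
    · exact hqq
    · exact hq j hj
    · rw [← hm.apply]; exact hq i hi
    · exact (hrel hi hj).1
  have hcorner0 := hcorner 0 1 (by decide)
  have hcorner1 := hcorner 1 0 (by decide)
  have hcols : (∀ i, 2 ≤ i → m 0 i = 0) → (∀ i, 2 ≤ i → m 1 i = 0) →
      ∀ i j, 2 ≤ j → m i j = 0 := by
    intro h0 h1 i j hj
    rcases (by decide : ∀ i : Fin 4, i = 0 ∨ i = 1 ∨ 2 ≤ i) i with rfl | rfl | hi
    exacts [h0 j hj, h1 j hj, (hrel hi hj).1]
  rcases eq_zero_or_eq_zero_of_mul_add_mul_eq_zero h2 (s := {i | 2 ≤ i}) (u := (m 0 ·))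
    (v := (m 1 ·)) fun i hi j hj => (hrel hi hj).2.1 with h0 | h1
  · by_cases h00 : m 0 0 = 0
    · exact Or.inr (Or.inl (hcorner1 h00 h0))
    have h1 : ∀ i, 2 ≤ i → m 1 i = 0 := fun i hi => by
      have : m 0 0 * m 1 i ^ 2 = 0 := by linear_combination hsq i hi - m 1 1 * m 0 i * h0 i hi
      exact pow_eq_zero_iff two_ne_zero |>.mp ((mul_eq_zero.mp this).resolve_left h00)
    by_cases h11 : m 1 1 = 0
    · exact Or.inl (hcorner0 h11 h1)
    · exact Or.inr (Or.inr ⟨h00, h11, hcols h0 h1⟩)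
  · by_cases h11 : m 1 1 = 0
    · exact Or.inl (hcorner0 h11 h1)
    have h0 : ∀ i, 2 ≤ i → m 0 i = 0 := fun i hi => by
      have : m 1 1 * m 0 i ^ 2 = 0 := by linear_combination hsq i hi - m 0 0 * m 1 i * h1 i hi
      exact pow_eq_zero_iff two_ne_zero |>.mp ((mul_eq_zero.mp this).resolve_left h11)
    by_cases h00 : m 0 0 = 0
    · exact Or.inr (Or.inl (hcorner1 h00 h0))
    · exact Or.inr (Or.inr ⟨h00, h11, hcols h0 h1⟩)

end Pencil

section Polynomial

variable {k : Type*} [Field k]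

theorem quadOfMat_eq_quadOfMatIn (N : Matrix (Fin 4) (Fin 4) k) :
    quadOfMat k N = quadOfMatIn N X :=
  rfl

theorem eval_quadOfMat (N : Matrix (Fin 4) (Fin 4) k) (x : Fin 4 → k) :
    eval x (quadOfMat k N) = x ⬝ᵥ N *ᵥ x := by
  simp only [quadOfMat, map_sum, smul_eval, eval_mul, eval_X, dotProduct, mulVec,
    Finset.mul_sum]
  exact Finset.sum_congr rfl fun i _ => Finset.sum_congr rfl fun j _ => by ring

theorem eq_of_quadOfMat_eq_of_isSymm (h2 : (2 : k) ≠ 0) {N N' : Matrix (Fin 4) (Fin 4) k}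
    (hN : N.IsSymm) (hN' : N'.IsSymm) (h : quadOfMat k N = quadOfMat k N') : N = N' := by
  rw [← sub_eq_zero]
  refine (hN.sub hN').eq_zero_of_forall_dotProduct_mulVec_self h2 fun x => ?_
  rw [sub_mulVec, dotProduct_sub, ← eval_quadOfMat, ← eval_quadOfMat, h, sub_self]

theorem rank_le_of_hasRankLE_quadOfMatIn (h2 : (2 : k) ≠ 0) {S m : Matrix (Fin 4) (Fin 4) k}
    (hS : IsUnit S) (hm : m.IsSymm) {r : ℕ}
    (h : HasRankLE k (quadOfMatIn m fun i => ∑ j, S i j • X j) r) : m.rank ≤ r := by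
  obtain ⟨N, hN, hq, hr⟩ := h
  have hSmS : Sᵀ * m * S = N :=
    eq_of_quadOfMat_eq_of_isSymm h2 (hm.transpose_mul_mul S) hN
      (hq ▸ quadOfMatIn_transpose_mul_mul S m X)
  have hdet := (isUnit_iff_isUnit_det S).mp hS
  rwa [← hSmS, rank_mul_eq_left_of_isUnit_det _ _ hdet,
    rank_mul_eq_right_of_isUnit_det _ _ (by rwa [det_transpose])] at hr

theorem exists_sum_smul_X_eq {σ : Type*} [Fintype σ] {a : MvPolynomial σ k}
    (ha : a ∈ homogeneousSubmodule σ k 1) : ∃ v : σ → k, ∑ i, v i • X i = a := by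
  rwa [homogeneousSubmodule_one_eq_span_X, Submodule.mem_span_range_iff_exists_fun] at ha

theorem sum_smul_X_mem_homogeneousSubmodule {σ : Type*} [Fintype σ] (v : σ → k) :
    ∑ i, v i • X i ∈ homogeneousSubmodule σ k 1 := by
  rw [homogeneousSubmodule_one_eq_span_X, Submodule.mem_span_range_iff_exists_fun]
  exact ⟨v, rfl⟩

theorem linearIndependent_of_sum_smul_X {σ : Type*} [Fintype σ] {v w : σ → k}
    (h : LinearIndependent k ![∑ i, v i • (X i : MvPolynomial σ k), ∑ i, w i • X i]) :
    LinearIndependent k ![v, w] := by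
  refine LinearIndependent.of_comp (Fintype.linearCombination k (X : σ → MvPolynomial σ k)) ?_
  convert h using 1
  ext i
  fin_cases i <;> simp [Fintype.linearCombination_apply]

theorem exists_isUnit_coordinates {a b : MvPolynomial (Fin 4) k}
    (ha : a ∈ homogeneousSubmodule (Fin 4) k 1) (hb : b ∈ homogeneousSubmodule (Fin 4) k 1)
    (hab : LinearIndependent k ![a, b]) :
    ∃ S : Matrix (Fin 4) (Fin 4) k, IsUnit S ∧ ∑ j, S 0 j • X j = a ∧ ∑ j, S 1 j • X j = b := by
  obtain ⟨v, rfl⟩ := exists_sum_smul_X_eq ha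
  obtain ⟨w, rfl⟩ := exists_sum_smul_X_eq hb
  obtain ⟨S, hS, hSvw⟩ := exists_isUnit_matrix_castLE_row_eq (by norm_num : 2 ≤ 4) ![v, w]
    (linearIndependent_of_sum_smul_X hab)
  exact ⟨S, hS, by rw [show S 0 = v from hSvw 0], by rw [show S 1 = w from hSvw 1]⟩

end Polynomial

theorem stmt5_general (k : Type*) [Field k] (hchar : (2 : k) ≠ 0)
    (Q Q' : MvPolynomial (Fin 4) k)
    (hind : LinearIndependent k ![Q, Q'])
    (hrk : ∀ p ∈ Submodule.span k {Q, Q'}, p ≠ 0 → HasRankLE k p 2)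
    (a b : MvPolynomial (Fin 4) k)
    (ha : a ∈ homogeneousSubmodule (Fin 4) k 1)
    (hb : b ∈ homogeneousSubmodule (Fin 4) k 1)
    (hab : LinearIndependent k ![a, b])
    (hfac : Q = a * b) :
    (∃ ℓ ∈ homogeneousSubmodule (Fin 4) k 1, Q' = ℓ * a) ∨
    (∃ ℓ ∈ homogeneousSubmodule (Fin 4) k 1, Q' = ℓ * b) ∨
    (∃ α β γ : k, α ≠ 0 ∧ γ ≠ 0 ∧
      Q' = α • a ^ 2 + β • (a * b) + γ • b ^ 2) := by
  have hpencil : ∀ t : k, HasRankLE k (Q' + t • Q) 2 := fun t =>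
    hrk _ (Submodule.add_mem _ (Submodule.subset_span (by simp))
      (Submodule.smul_mem _ _ (Submodule.subset_span (by simp))))
      fun h => one_ne_zero (LinearIndependent.pair_iff.mp hind t 1 (by rwa [one_smul, add_comm])).2
  obtain ⟨S, hS, rfl, rfl⟩ := exists_isUnit_coordinates ha hb hab
  set L : Fin 4 → MvPolynomial (Fin 4) k := fun i => ∑ j, S i j • X j
  obtain ⟨M, hM, hQ'M, -⟩ : HasRankLE k Q' 2 := by simpa using hpencil 0
  obtain ⟨m, hm, rfl⟩ := hM.exists_isSymm_transpose_mul_mul_eq hS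
  rw [quadOfMat_eq_quadOfMatIn, quadOfMatIn_transpose_mul_mul] at hQ'M
  have hrank : ∀ t : k, (m + t • hyperbolicMatrix k).rank ≤ 2 := fun t => by
    refine rank_le_of_hasRankLE_quadOfMatIn hchar hS (hm.add (hyperbolicMatrix_isSymm.smul t)) ?_
    rw [quadOfMatIn_add, quadOfMatIn_smul, quadOfMatIn_hyperbolicMatrix, ← hQ'M, two_mul,
      ← two_smul k, ← mul_smul, mul_comm t]
    exact hfac ▸ hpencil (2 * t)
  have hspan : Submodule.span k (Set.range L) ≤ homogeneousSubmodule (Fin 4) k 1 :=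
    Submodule.span_le.mpr <| Set.range_subset_iff.mpr fun _ =>
      sum_smul_X_mem_homogeneousSubmodule _
  rcases trichotomy_of_rank_pencil_le_two hchar hm hrank with h | h | ⟨h0, h1, h⟩
  · obtain ⟨ℓ, hℓ, hQ'⟩ := exists_mem_span_quadOfMatIn_eq_mul_of_forall_ne hm L h
    exact Or.inl ⟨ℓ, hspan hℓ, hQ'M.trans hQ'⟩
  · obtain ⟨ℓ, hℓ, hQ'⟩ := exists_mem_span_quadOfMatIn_eq_mul_of_forall_ne hm L h
    exact Or.inr (Or.inl ⟨ℓ, hspan hℓ, hQ'M.trans hQ'⟩)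
  · exact Or.inr (Or.inr ⟨m 0 0, 2 * m 0 1, m 1 1, h0, h1,
      hQ'M.trans (quadOfMatIn_eq_of_forall_two_le hm L h)⟩)

theorem stmt5 (k : Type*) [Field k] [IsAlgClosed k] (hchar : (2 : k) ≠ 0)
    (Q Q' : MvPolynomial (Fin 4) k)
    (hQ : Q ∈ homogeneousSubmodule (Fin 4) k 2)
    (hQ' : Q' ∈ homogeneousSubmodule (Fin 4) k 2)
    (hind : LinearIndependent k ![Q, Q'])
    (hrk : ∀ p ∈ Submodule.span k {Q, Q'}, p ≠ 0 → HasRankLE k p 2)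
    (a b : MvPolynomial (Fin 4) k)
    (ha : a ∈ homogeneousSubmodule (Fin 4) k 1)
    (hb : b ∈ homogeneousSubmodule (Fin 4) k 1)
    (hab : LinearIndependent k ![a, b])
    (hfac : Q = a * b) :
    (∃ ℓ ∈ homogeneousSubmodule (Fin 4) k 1, Q' = ℓ * a) ∨
    (∃ ℓ ∈ homogeneousSubmodule (Fin 4) k 1, Q' = ℓ * b) ∨
    (∃ α β γ : k, α ≠ 0 ∧ γ ≠ 0 ∧
      Q' = α • a ^ 2 + β • (a * b) + γ • b ^ 2) :=
  stmt5_general k hchar Q Q' hind hrk a b ha hb hab hfac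
end
end

section
/- If the quadric system associated to N₁, …, Nₙ is base point free and the quantity 2r₂ + r₁ is finite, then r₁ ∈ {0, 1}. (Final assertion of [VVW], Theorem 1.7, where 2r₂ + r₁ equals the number of isomorphism classes of point modules over the associated graded Clifford algebra.) -/
/-!
Two distinct rank-one lines `k ∙ M` and `k ∙ M'` in the span would span a pencil
`M + c • M'`, `c ∈ k`, of pairwise distinct lines. Rank is subadditive, so every member of
the pencil has rank one or two, and since `k` is infinite this contradicts the finiteness
of the rank-one and rank-two lines.
-/

namespace Matrix

variable {K m n : Type*} [Field K] [Fintype n]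

theorem rank_eq_zero_iff {A : Matrix m n K} : A.rank = 0 ↔ A = 0 := by
  classical
  rw [rank, Submodule.finrank_eq_zero, LinearMap.range_eq_bot, ← toLin'_apply',
    map_eq_zero_iff _ toLin'.injective]

theorem rank_add_le (A B : Matrix m n K) : (A + B).rank ≤ A.rank + B.rank := by
  have hle : LinearMap.range (A + B).mulVecLin ≤
      LinearMap.range A.mulVecLin ⊔ LinearMap.range B.mulVecLin := by
    rw [mulVecLin_add]
    exact LinearMap.range_add_le _ _
  exact (Submodule.finrank_mono hle).trans (Submodule.finrank_add_le_finrank_add_finrank _ _)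

theorem rank_smul_le (c : K) (A : Matrix m n K) : (c • A).rank ≤ A.rank := by
  rw [rank, rank, show (c • A).mulVecLin = c • A.mulVecLin from map_smul (mulVecBilin K K) c A]
  exact Submodule.finrank_mono (LinearMap.range_smul_le_range _ _)

end Matrix

section Pencil

variable {K V : Type*} [Field K] [AddCommGroup V] [Module K V] {x y : V}

theorem LinearIndependent.pair_of_span_singleton_ne (hx : x ≠ 0) (hy : y ≠ 0)
    (h : (K ∙ x) ≠ (K ∙ y)) : LinearIndependent K ![x, y] := by
  refine (LinearIndependent.pair_iff' hx).mpr fun a hay => h ?_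
  have ha : a ≠ 0 := by rintro rfl; exact hy (by rw [← hay, zero_smul])
  rw [← hay, Submodule.span_singleton_smul_eq (IsUnit.mk0 a ha)]

theorem LinearIndependent.add_smul_ne_zero (h : LinearIndependent K ![x, y]) (c : K) :
    x + c • y ≠ 0 := fun h0 =>
  one_ne_zero (LinearIndependent.pair_iff.mp h 1 c (by rwa [one_smul])).1

theorem LinearIndependent.injective_span_singleton_add_smul (h : LinearIndependent K ![x, y]) :
    Function.Injective fun c : K => K ∙ (x + c • y) := by
  intro c c' hcc'
  obtain ⟨z, hz⟩ := Submodule.span_singleton_eq_span_singleton.mp hcc'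
  obtain ⟨hz1, hc⟩ := LinearIndependent.pair_iff.mp h ((z : K) - 1) ((z : K) * c - c') <| by
    rw [Units.smul_def] at hz
    linear_combination (norm := module) hz
  rw [sub_eq_zero] at hz1 hc
  rwa [hz1, one_mul] at hc

end Pencil

section RankLines

variable {K m n : Type*} [Field K] [Fintype n]

/-- `(rankLines P j).ncard` is the paper's `r_j` for `P = span {N₁, …, Nₙ}`. -/
def rankLines (P : Submodule K (Matrix m n K)) (j : ℕ) : Set (Submodule K (Matrix m n K)) :=
  {W | ∃ M ∈ P, M ≠ 0 ∧ W = K ∙ M ∧ M.rank = j}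

theorem span_add_smul_mem_rankLines {P : Submodule K (Matrix m n K)} {M M' : Matrix m n K}
    (hM : M ∈ P) (hM' : M' ∈ P) (hrank : M.rank = 1) (hrank' : M'.rank = 1)
    (hind : LinearIndependent K ![M, M']) (c : K) :
    (K ∙ (M + c • M')) ∈ rankLines P 1 ∪ rankLines P 2 := by
  have hne := hind.add_smul_ne_zero c
  have hmem : M + c • M' ∈ P := P.add_mem hM (P.smul_mem c hM')
  have hpos : 0 < (M + c • M').rank := Nat.pos_of_ne_zero (Matrix.rank_eq_zero_iff.not.mpr hne)
  have hle : (M + c • M').rank ≤ 2 :=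
    calc (M + c • M').rank ≤ M.rank + (c • M').rank := Matrix.rank_add_le _ _
      _ ≤ M.rank + M'.rank := Nat.add_le_add_left (Matrix.rank_smul_le c M') _
      _ = 2 := by rw [hrank, hrank']
  interval_cases h : (M + c • M').rank
  · exact Or.inl ⟨_, hmem, hne, rfl, h⟩
  · exact Or.inr ⟨_, hmem, hne, rfl, h⟩

theorem ncard_rankLines_one_le_one [Infinite K] (P : Submodule K (Matrix m n K))
    (h1 : (rankLines P 1).Finite) (h2 : (rankLines P 2).Finite) :
    (rankLines P 1).ncard ≤ 1 := by
  by_contra! hcard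
  obtain ⟨W, W', ⟨M, hM, hM0, rfl, hrank⟩, ⟨M', hM', hM0', rfl, hrank'⟩, hne⟩ :=
    (Set.one_lt_ncard_iff h1).mp hcard
  have hind := LinearIndependent.pair_of_span_singleton_ne hM0 hM0' hne
  exact Set.infinite_of_injective_forall_mem hind.injective_span_singleton_add_smul
    (span_add_smul_mem_rankLines hM hM' hrank hrank' hind) (h1.union h2)

end RankLines

theorem stmt8_general (k : Type*) [Field k] [IsAlgClosed k]
    (n : ℕ)
    (N : Fin n → Matrix (Fin n) (Fin n) k)
    (hfin1 : {W : Submodule k (Matrix (Fin n) (Fin n) k) |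
        ∃ M ∈ Submodule.span k (Set.range N), M ≠ 0 ∧ W = Submodule.span k {M} ∧
          M.rank = 1}.Finite)
    (hfin2 : {W : Submodule k (Matrix (Fin n) (Fin n) k) |
        ∃ M ∈ Submodule.span k (Set.range N), M ≠ 0 ∧ W = Submodule.span k {M} ∧
          M.rank = 2}.Finite) :
    {W : Submodule k (Matrix (Fin n) (Fin n) k) |
        ∃ M ∈ Submodule.span k (Set.range N), M ≠ 0 ∧ W = Submodule.span k {M} ∧
          M.rank = 1}.ncard = 0 ∨
    {W : Submodule k (Matrix (Fin n) (Fin n) k) |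
        ∃ M ∈ Submodule.span k (Set.range N), M ≠ 0 ∧ W = Submodule.span k {M} ∧
          M.rank = 1}.ncard = 1 := by
  have := ncard_rankLines_one_le_one (Submodule.span k (Set.range N)) hfin1 hfin2
  unfold rankLines at this
  omega

theorem stmt8 (k : Type*) [Field k] [IsAlgClosed k] (hchar : (2 : k) ≠ 0)
    (n : ℕ)
    (N : Fin n → Matrix (Fin n) (Fin n) k)
    (hsymm : ∀ i, (N i).IsSymm)
    (hbpf : ∀ v : Fin n → k, (∀ i, dotProduct v ((N i).mulVec v) = 0) → v = 0)
    (hfin1 : {W : Submodule k (Matrix (Fin n) (Fin n) k) |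
        ∃ M ∈ Submodule.span k (Set.range N), M ≠ 0 ∧ W = Submodule.span k {M} ∧
          M.rank = 1}.Finite)
    (hfin2 : {W : Submodule k (Matrix (Fin n) (Fin n) k) |
        ∃ M ∈ Submodule.span k (Set.range N), M ≠ 0 ∧ W = Submodule.span k {M} ∧
          M.rank = 2}.Finite) :
    {W : Submodule k (Matrix (Fin n) (Fin n) k) |
        ∃ M ∈ Submodule.span k (Set.range N), M ≠ 0 ∧ W = Submodule.span k {M} ∧
          M.rank = 1}.ncard = 0 ∨
    {W : Submodule k (Matrix (Fin n) (Fin n) k) |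
        ∃ M ∈ Submodule.span k (Set.range N), M ≠ 0 ∧ W = Submodule.span k {M} ∧
          M.rank = 1}.ncard = 1 :=
  stmt8_general k n N hfin1 hfin2
end
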